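/- ∫_0^∞ ∏_{n≥0} (Γ(n+1, t)/n!) dt ≤ 3/4. -/

import Mathlib

open MeasureTheory Real

/-- `uGamma n t = Γ(n+1, t) = ∫_t^∞ e^{-u} u^n du`, the upper incomplete gamma function. -/
noncomputable def uGamma (n : ℕ) (t : ℝ) : ℝ := ∫ u in Set.Ioi t, Real.exp (-u) * u ^ n

lemma tprod_le_first_two {f : ℕ → ℝ} (h0 : ∀ i, 0 ≤ f i) (h1 : ∀ i, f i ≤ 1) :
    (∏' i, f i) ≤ f 0 * f 1 := by
  set g : Finset ℕ → ℝ := fun s => ∏ i ∈ s, f i with hg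
  have hant : Antitone g := by
    intro s t hst
    have := Finset.prod_sdiff (f := f) hst
    calc g t = (∏ i ∈ t \ s, f i) * ∏ i ∈ s, f i := this.symm
      _ ≤ 1 * ∏ i ∈ s, f i := by
          apply mul_le_mul_of_nonneg_right
          · exact Finset.prod_le_one (fun i _ => h0 i) (fun i _ => h1 i)
          · exact Finset.prod_nonneg fun i _ => h0 i
      _ = g s := one_mul _
  have hbdd : BddBelow (Set.range g) := by
    refine ⟨0, ?_⟩
    rintro x ⟨s, rfl⟩
    exact Finset.prod_nonneg fun i _ => h0 i
  have hp : HasProd f (⨅ s, g s) := tendsto_atTop_ciInf hant hbdd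
  rw [hp.tprod_eq]
  calc (⨅ s, g s) ≤ g {0, 1} := ciInf_le hbdd _
    _ = f 0 * f 1 := by simp [hg]

lemma tprod_nonneg' {f : ℕ → ℝ} (h0 : ∀ i, 0 ≤ f i) : 0 ≤ ∏' i, f i := by
  by_cases hm : Multipliable f
  · exact ge_of_tendsto' hm.hasProd fun s => Finset.prod_nonneg fun i _ => h0 i
  · rw [tprod_eq_one_of_not_multipliable hm]; norm_num

lemma integrableOn_exp_neg_mul_pow (n : ℕ) :
    IntegrableOn (fun u : ℝ => Real.exp (-u) * u ^ n) (Set.Ioi 0) := by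
  have h := Real.GammaIntegral_convergent (s := n + 1) (by positivity)
  refine h.congr_fun (fun x hx => ?_) measurableSet_Ioi
  rw [show ((n : ℝ) + 1 - 1) = (n : ℝ) by ring]; simp only [Real.rpow_natCast]

lemma uGamma_nonneg {n : ℕ} {t : ℝ} (ht : 0 ≤ t) : 0 ≤ uGamma n t := by
  refine setIntegral_nonneg measurableSet_Ioi fun u hu => ?_
  have : (0:ℝ) ≤ u := le_trans ht (le_of_lt hu)
  positivity

lemma uGamma_le_factorial {n : ℕ} {t : ℝ} (ht : 0 ≤ t) : uGamma n t ≤ n.factorial := by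
  have h1 : uGamma n t ≤ uGamma n 0 := by
    refine setIntegral_mono_set (integrableOn_exp_neg_mul_pow n) ?_ ?_
    · filter_upwards [ae_restrict_mem measurableSet_Ioi] with u hu
      have : (0:ℝ) ≤ u := le_of_lt hu
      positivity
    · exact (Set.Ioi_subset_Ioi ht).eventuallyLE
  have h2 : uGamma n 0 = n.factorial := by
    have := Real.Gamma_nat_eq_factorial n
    rw [Real.Gamma_eq_integral (by positivity : (0:ℝ) < n + 1)] at this
    rw [uGamma, ← this]
    refine setIntegral_congr_fun measurableSet_Ioi fun x hx => ?_
    rw [show ((n : ℝ) + 1 - 1) = (n : ℝ) by ring, Real.rpow_natCast]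
  linarith

lemma uGamma_zero (t : ℝ) : uGamma 0 t = Real.exp (-t) := by
  simp only [uGamma, pow_zero, mul_one]
  exact integral_exp_neg_Ioi t

lemma uGamma_one {t : ℝ} (ht : 0 ≤ t) : uGamma 1 t = (1 + t) * Real.exp (-t) := by
  have key : ∫ u in Set.Ioi t, Real.exp (-u) * u ^ 1
      = 0 - (-(1 + t) * Real.exp (-t)) := by
    refine integral_Ioi_of_hasDerivAt_of_tendsto'
      (f := fun u => -(1 + u) * Real.exp (-u)) (fun x _ => ?_) ?_ ?_
    · have h1 : HasDerivAt (fun u : ℝ => -(1 + u)) (-(1:ℝ)) x := by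
        exact ((hasDerivAt_id x).const_add 1).neg
      have h2 : HasDerivAt (fun u : ℝ => Real.exp (-u)) (Real.exp (-x) * -1) x := by
        simpa using ((hasDerivAt_id x).neg).exp
      exact (h1.mul h2).congr_deriv (by ring)
    · exact (integrableOn_exp_neg_mul_pow 1).mono_set (Set.Ioi_subset_Ioi ht)
    · have h1 : Filter.Tendsto (fun x : ℝ => x ^ 1 * Real.exp (-x)) Filter.atTop (nhds 0) :=
        tendsto_pow_mul_exp_neg_atTop_nhds_zero 1
      have h2 : Filter.Tendsto (fun x : ℝ => Real.exp (-x)) Filter.atTop (nhds 0) := by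
        simpa using tendsto_pow_mul_exp_neg_atTop_nhds_zero 0
      have := (h2.add h1).neg
      simp only [pow_one, neg_zero, add_zero] at this
      refine this.congr fun x => by ring
  rw [uGamma]
  rw [key]; ring

lemma bound_integrable :
    IntegrableOn (fun t : ℝ => (1 + t) * Real.exp (-2 * t)) (Set.Ioi 0) := by
  refine Integrable.mono' (g := fun t => Real.exp (-1 * t)) (exp_neg_integrableOn_Ioi 0 one_pos)
    (((continuous_const.add continuous_id).mul
      (Real.continuous_exp.comp (continuous_const.mul continuous_id))).aestronglyMeasurable) ?_
  filter_upwards [ae_restrict_mem measurableSet_Ioi] with t ht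
  have ht0 : (0:ℝ) ≤ t := le_of_lt ht
  rw [Real.norm_eq_abs, abs_of_nonneg (by positivity)]
  have h1 : 1 + t ≤ Real.exp t := by
    have := Real.add_one_le_exp t
    linarith
  calc (1 + t) * Real.exp (-2 * t) ≤ Real.exp t * Real.exp (-2 * t) :=
        mul_le_mul_of_nonneg_right h1 (Real.exp_nonneg _)
    _ = Real.exp (-1 * t) := by rw [← Real.exp_add]; congr 1; ring

lemma bound_integral : ∫ t in Set.Ioi (0:ℝ), (1 + t) * Real.exp (-2 * t) = 3 / 4 := by
  have key : ∫ t in Set.Ioi (0:ℝ), (1 + t) * Real.exp (-2 * t)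
      = 0 - (-(2 * 0 + 3) / 4 * Real.exp (-2 * 0)) := by
    refine integral_Ioi_of_hasDerivAt_of_tendsto'
      (f := fun t => -(2 * t + 3) / 4 * Real.exp (-2 * t)) (fun x _ => ?_) bound_integrable ?_
    · have h1 : HasDerivAt (fun t : ℝ => -(2 * t + 3) / 4) (-(2 * 1) / 4) x :=
        (((hasDerivAt_id x).const_mul 2).add_const 3).neg.div_const 4
      have h2 : HasDerivAt (fun t : ℝ => Real.exp (-2 * t)) (Real.exp (-2 * x) * (-2 * 1)) x :=
        ((hasDerivAt_id x).const_mul (-2)).exp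
      exact (h1.mul h2).congr_deriv (by ring)
    · have h1 : Filter.Tendsto (fun x : ℝ => x ^ 1 * Real.exp (-x)) Filter.atTop (nhds 0) :=
        tendsto_pow_mul_exp_neg_atTop_nhds_zero 1
      have h2 : Filter.Tendsto (fun x : ℝ => Real.exp (-x)) Filter.atTop (nhds 0) := by
        simpa using tendsto_pow_mul_exp_neg_atTop_nhds_zero 0
      have hcomp : Filter.Tendsto (fun x : ℝ => (2:ℝ) * x) Filter.atTop Filter.atTop :=
        Filter.Tendsto.const_mul_atTop two_pos Filter.tendsto_id
      have A := h1.comp hcomp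
      have B := h2.comp hcomp
      have C := (A.const_mul (-(1:ℝ)/4)).add (B.const_mul (-3/4))
      simp only [Function.comp, mul_zero, add_zero] at C
      refine C.congr fun x => ?_
      have he : Real.exp (-(2 * x)) = Real.exp (-2 * x) := by ring_nf
      simp only [he]
      ring
  rw [key]
  simp [Real.exp_zero]
  norm_num

theorem integral_product_incomplete_gamma_le :
    (∫ t in Set.Ioi (0 : ℝ), ∏' n : ℕ, uGamma n t / (Nat.factorial n : ℝ)) ≤ 3 / 4 := by
  rw [← bound_integral]
  refine integral_mono_of_nonneg ?_ bound_integrable ?_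
  · filter_upwards [ae_restrict_mem measurableSet_Ioi] with t ht
    exact tprod_nonneg' fun n => div_nonneg (uGamma_nonneg (le_of_lt ht)) (by positivity)
  · filter_upwards [ae_restrict_mem measurableSet_Ioi] with t ht
    have ht0 : (0:ℝ) ≤ t := le_of_lt ht
    have key := tprod_le_first_two (f := fun n => uGamma n t / (Nat.factorial n : ℝ))
      (fun n => div_nonneg (uGamma_nonneg ht0) (by positivity))
      (fun n => by
        rw [div_le_one (by positivity)]
        exact uGamma_le_factorial ht0)
    refine key.trans_eq ?_
    simp only [uGamma_zero, uGamma_one ht0, Nat.factorial_zero, Nat.factorial_one,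
      Nat.cast_one, div_one]
    rw [show (-2 * t : ℝ) = -t + -t by ring, Real.exp_add]
    ring
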